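/- Let R be a commutative ring with ℚ ⊆ R and V an R-module. For ξ ∈ Λ V (the exterior algebra) and ℓ ∈ ℕ, the projection onto exterior degree ℓ satisfies pr_{Λ^ℓ V}(ξ) = (1/ℓ!) · pr_V(ξ₍₁₎) ∧ ⋯ ∧ pr_V(ξ₍ℓ₎), where the Sweedler notation refers to the iterated graded shuffle coproduct on Λ V. -/

import Mathlib

open TensorProduct

/-- Iterated Sweedler product `ξ ↦ p₁(ξ₍₁₎) ∧ ⋯ ∧ p₁(ξ₍ℓ₎)` (with a trailing counit
factor `p₀(ξ₍ℓ₊₁₎)`, harmless by counitality), defined by iterating the coproduct `Δ`. -/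
noncomputable def sweedlerProd' {R : Type*} [CommRing R] {S : Type*} [Ring S] [Algebra R S]
    (Δ : S →ₗ[R] S ⊗[R] S) (p₁ p₀ : S →ₗ[R] S) : ℕ → (S →ₗ[R] S)
  | 0 => p₀
  | r + 1 => LinearMap.mul' R S ∘ₗ TensorProduct.map p₁ (sweedlerProd' Δ p₁ p₀ r) ∘ₗ Δ

variable (R : Type*) [CommRing R] [Algebra ℚ R] (V : Type*) [AddCommGroup V] [Module R V]

/-- The grade involution (parity automorphism) of the exterior algebra,
`ξ ↦ (−1)^{|ξ|} ξ` on homogeneous elements. -/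
noncomputable def gradeInvol : ExteriorAlgebra R V →ₐ[R] ExteriorAlgebra R V :=
  ExteriorAlgebra.lift R ⟨-(ExteriorAlgebra.ι R (M := V)), fun m => by
    simp [ExteriorAlgebra.ι_sq_zero]⟩

namespace ProjSweedlerAux

variable {R V}
set_option linter.unusedSectionVars false

/-- Monomial: product of `ι`'s over a list of vectors. -/
noncomputable def ιp (vs : List V) : ExteriorAlgebra R V :=
  (vs.map (ExteriorAlgebra.ι R)).prod

@[simp] lemma ιp_nil : (ιp ([] : List V) : ExteriorAlgebra R V) = 1 := rfl

@[simp] lemma ιp_cons (v : V) (vs : List V) :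
    (ιp (v :: vs) : ExteriorAlgebra R V) = ExteriorAlgebra.ι R v * ιp vs := by
  simp [ιp]

lemma ofFn_eq_ιp (vs : List V) :
    ((List.ofFn fun j => ExteriorAlgebra.ι R (vs.get j)).prod : ExteriorAlgebra R V)
      = ιp vs := by
  simp only [ιp, ← List.ofFn_getElem_eq_map, List.get_eq_getElem]

/-- monomials span the exterior algebra -/
lemma span_ιp_eq_top :
    Submodule.span R (Set.range (ιp : List V → ExteriorAlgebra R V)) = ⊤ := by
  rw [Submodule.eq_top_iff']
  intro x
  induction x using ExteriorAlgebra.induction with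
  | algebraMap r =>
    rw [Algebra.algebraMap_eq_smul_one]
    have h1 : (1 : ExteriorAlgebra R V) ∈ Set.range (ιp : List V → ExteriorAlgebra R V) :=
      ⟨[], ιp_nil⟩
    exact Submodule.smul_mem _ _ (Submodule.subset_span h1)
  | ι v =>
    have h1 : ExteriorAlgebra.ι R v ∈ Set.range (ιp : List V → ExteriorAlgebra R V) :=
      ⟨[v], by simp⟩
    exact Submodule.subset_span h1
  | mul a b ha hb =>
    induction ha using Submodule.span_induction with
    | mem a hmem =>
      obtain ⟨vs, rfl⟩ := hmem
      induction hb using Submodule.span_induction with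
      | mem b hmem' =>
        obtain ⟨ws, rfl⟩ := hmem'
        refine Submodule.subset_span ⟨vs ++ ws, ?_⟩
        simp [ιp]
      | zero => simpa using Submodule.zero_mem _
      | add b c _ _ h1 h2 => rw [mul_add]; exact Submodule.add_mem _ h1 h2
      | smul r b _ h1 => rw [mul_smul_comm]; exact Submodule.smul_mem _ _ h1
    | zero => simpa using Submodule.zero_mem _
    | add a c _ _ h1 h2 => rw [add_mul]; exact Submodule.add_mem _ h1 h2
    | smul r a _ h1 => rw [smul_mul_assoc]; exact Submodule.smul_mem _ _ h1
  | add a b ha hb => exact Submodule.add_mem _ ha hb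

lemma ext_ιp {f g : ExteriorAlgebra R V →ₗ[R] ExteriorAlgebra R V}
    (h : ∀ vs : List V, f (ιp vs) = g (ιp vs)) (x : ExteriorAlgebra R V) : f x = g x := by
  have hx : x ∈ Submodule.span R (Set.range (ιp : List V → ExteriorAlgebra R V)) := by
    rw [span_ιp_eq_top]; trivial
  induction hx using Submodule.span_induction with
  | mem a hmem => obtain ⟨vs, rfl⟩ := hmem; exact h vs
  | zero => simp
  | add a b _ _ h1 h2 => simp [h1, h2]
  | smul r a _ h1 => simp [h1]

@[simp] lemma gradeInvol_ι (v : V) :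
    gradeInvol R V (ExteriorAlgebra.ι R v) = -ExteriorAlgebra.ι R v := by
  rw [gradeInvol, ExteriorAlgebra.lift_ι_apply]
  simp

lemma gradeInvol_ιp (vs : List V) :
    gradeInvol R V (ιp vs) = ((-1 : ℤ) ^ vs.length) • ιp vs := by
  induction vs with
  | nil => simp
  | cons v vs ih =>
    rw [ιp_cons, map_mul, gradeInvol_ι, ih]
    rw [List.length_cons, pow_succ, mul_smul, neg_one_zsmul, smul_neg,
      neg_mul, mul_smul_comm]


section WithP

variable (Δ : ExteriorAlgebra R V →ₗ[R] ExteriorAlgebra R V ⊗[R] ExteriorAlgebra R V)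
variable (P : ℕ → (ExteriorAlgebra R V →ₗ[R] ExteriorAlgebra R V))
variable (hP : ∀ (ℓ s : ℕ) (x : Fin s → V),
      P ℓ ((List.ofFn fun j => ExteriorAlgebra.ι R (x j)).prod)
        = if s = ℓ then (List.ofFn fun j => ExteriorAlgebra.ι R (x j)).prod else 0)

include hP

lemma P_ιp (ℓ : ℕ) (vs : List V) :
    P ℓ (ιp vs) = if vs.length = ℓ then ιp vs else 0 := by
  have h := hP ℓ vs.length vs.get
  rwa [ofFn_eq_ιp] at h

lemma P0_one : P 0 (1 : ExteriorAlgebra R V) = 1 := by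
  simpa using P_ιp P hP 0 []

lemma P1_one : P 1 (1 : ExteriorAlgebra R V) = 0 := by
  simpa using P_ιp P hP 1 []

lemma P1_gradeInvol (x : ExteriorAlgebra R V) :
    P 1 (gradeInvol R V x) = - P 1 x := by
  refine ext_ιp (f := (P 1) ∘ₗ (gradeInvol R V).toLinearMap) (g := -(P 1)) (fun vs => ?_) x
  simp only [LinearMap.comp_apply, AlgHom.toLinearMap_apply, LinearMap.neg_apply]
  rw [gradeInvol_ιp, map_zsmul, P_ιp P hP]
  rcases eq_or_ne vs.length 1 with h | h
  · simp [h]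
  · simp [h]

lemma P0_gradeInvol (x : ExteriorAlgebra R V) :
    P 0 (gradeInvol R V x) = P 0 x := by
  refine ext_ιp (f := (P 0) ∘ₗ (gradeInvol R V).toLinearMap) (g := P 0) (fun vs => ?_) x
  simp only [LinearMap.comp_apply, AlgHom.toLinearMap_apply]
  rw [gradeInvol_ιp, map_zsmul, P_ιp P hP]
  rcases eq_or_ne vs.length 0 with h | h
  · simp [h]
  · simp [h]

lemma P1_mulLeft (v : V) (x : ExteriorAlgebra R V) :
    P 1 (ExteriorAlgebra.ι R v * x) = ExteriorAlgebra.ι R v * P 0 x := by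
  refine ext_ιp (f := (P 1) ∘ₗ LinearMap.mulLeft R (ExteriorAlgebra.ι R v))
    (g := LinearMap.mulLeft R (ExteriorAlgebra.ι R v) ∘ₗ (P 0)) (fun vs => ?_) x
  simp only [LinearMap.comp_apply, LinearMap.mulLeft_apply]
  rw [← ιp_cons, P_ιp P hP, P_ιp P hP]
  rcases eq_or_ne vs.length 0 with h | h
  · rw [if_pos h, if_pos (by simp [h]), ιp_cons]
  · rw [if_neg h, if_neg (by simpa using h), mul_zero]

lemma P0_mulLeft (v : V) (x : ExteriorAlgebra R V) :
    P 0 (ExteriorAlgebra.ι R v * x) = 0 := by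
  refine ext_ιp (f := (P 0) ∘ₗ LinearMap.mulLeft R (ExteriorAlgebra.ι R v))
    (g := 0) (fun vs => ?_) x
  simp only [LinearMap.comp_apply, LinearMap.mulLeft_apply, LinearMap.zero_apply]
  rw [← ιp_cons, P_ιp P hP, if_neg (by simp)]

lemma helper1 (v : V) (g : ExteriorAlgebra R V →ₗ[R] ExteriorAlgebra R V)
    (X : ExteriorAlgebra R V ⊗[R] ExteriorAlgebra R V) :
    LinearMap.mul' R _ (TensorProduct.map (P 1) g
        ((ExteriorAlgebra.ι R v ⊗ₜ[R] (1 : ExteriorAlgebra R V)) * X))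
      = ExteriorAlgebra.ι R v * LinearMap.mul' R _ (TensorProduct.map (P 0) g X) := by
  induction X with
  | zero => simp
  | tmul x y =>
    rw [Algebra.TensorProduct.tmul_mul_tmul, one_mul, TensorProduct.map_tmul,
      TensorProduct.map_tmul, LinearMap.mul'_apply, LinearMap.mul'_apply,
      P1_mulLeft P hP, mul_assoc]
  | add x y hx hy => simp only [mul_add, map_add, hx, hy, mul_add]

lemma helper2 (v : V) (g : ExteriorAlgebra R V →ₗ[R] ExteriorAlgebra R V)
    (X : ExteriorAlgebra R V ⊗[R] ExteriorAlgebra R V) :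
    LinearMap.mul' R _ (TensorProduct.map (P 0) g
        ((ExteriorAlgebra.ι R v ⊗ₜ[R] (1 : ExteriorAlgebra R V)) * X)) = 0 := by
  induction X with
  | zero => simp
  | tmul x y =>
    rw [Algebra.TensorProduct.tmul_mul_tmul, one_mul, TensorProduct.map_tmul,
      LinearMap.mul'_apply, P0_mulLeft P hP, zero_mul]
  | add x y hx hy => simp only [mul_add, map_add, hx, hy, add_zero]

lemma helper3 (v : V) (g : ExteriorAlgebra R V →ₗ[R] ExteriorAlgebra R V)
    (X : ExteriorAlgebra R V ⊗[R] ExteriorAlgebra R V) :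
    LinearMap.mul' R _ (TensorProduct.map (P 1) g
        (TensorProduct.map (gradeInvol R V).toLinearMap
          (LinearMap.mulLeft R (ExteriorAlgebra.ι R v)) X))
      = - LinearMap.mul' R _ (TensorProduct.map (P 1)
          (g ∘ₗ LinearMap.mulLeft R (ExteriorAlgebra.ι R v)) X) := by
  induction X with
  | zero => simp
  | tmul x y =>
    simp only [TensorProduct.map_tmul, LinearMap.mul'_apply, AlgHom.toLinearMap_apply,
      LinearMap.mulLeft_apply, LinearMap.comp_apply]
    rw [P1_gradeInvol P hP, neg_mul]
  | add x y hx hy => simp only [map_add, hx, hy, neg_add]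

lemma helper4 (v : V) (g : ExteriorAlgebra R V →ₗ[R] ExteriorAlgebra R V)
    (X : ExteriorAlgebra R V ⊗[R] ExteriorAlgebra R V) :
    LinearMap.mul' R _ (TensorProduct.map (P 0) g
        (TensorProduct.map (gradeInvol R V).toLinearMap
          (LinearMap.mulLeft R (ExteriorAlgebra.ι R v)) X))
      = LinearMap.mul' R _ (TensorProduct.map (P 0)
          (g ∘ₗ LinearMap.mulLeft R (ExteriorAlgebra.ι R v)) X) := by
  induction X with
  | zero => simp
  | tmul x y =>
    simp only [TensorProduct.map_tmul, LinearMap.mul'_apply, AlgHom.toLinearMap_apply,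
      LinearMap.mulLeft_apply, LinearMap.comp_apply]
    rw [P0_gradeInvol P hP]
  | add x y hx hy => simp only [map_add, hx, hy]

variable (hΔ1 : Δ 1 = 1 ⊗ₜ[R] 1)
variable (hΔ : ∀ (v : V) (ξ : ExteriorAlgebra R V),
      Δ (ExteriorAlgebra.ι R v * ξ)
        = (ExteriorAlgebra.ι R v ⊗ₜ[R] (1 : ExteriorAlgebra R V)) * Δ ξ
          + TensorProduct.map (gradeInvol R V).toLinearMap
              (LinearMap.mulLeft R (ExteriorAlgebra.ι R v)) (Δ ξ))

include hΔ1 hΔ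

lemma counit_left : ∀ (vs : List V) (g : ExteriorAlgebra R V →ₗ[R] ExteriorAlgebra R V),
    LinearMap.mul' R _ (TensorProduct.map (P 0) g (Δ (ιp vs))) = g (ιp vs) := by
  intro vs
  induction vs with
  | nil =>
    intro g
    rw [ιp_nil, hΔ1, TensorProduct.map_tmul, LinearMap.mul'_apply, P0_one P hP, one_mul]
  | cons v vs ih =>
    intro g
    rw [ιp_cons, hΔ]
    simp only [map_add]
    rw [helper2 P hP, helper4 P hP, zero_add,
      ih (g ∘ₗ LinearMap.mulLeft R (ExteriorAlgebra.ι R v))]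
    simp

lemma sum_lemma : ∀ (vs : List V) (g : ExteriorAlgebra R V →ₗ[R] ExteriorAlgebra R V),
    LinearMap.mul' R _ (TensorProduct.map (P 1) g (Δ (ιp vs)))
      = ∑ i : Fin vs.length, ((-1 : ℤ) ^ (i : ℕ)) •
          (ExteriorAlgebra.ι R (vs.get i) * g (ιp (vs.eraseIdx (i : ℕ)))) := by
  intro vs
  induction vs with
  | nil =>
    intro g
    rw [ιp_nil, hΔ1, TensorProduct.map_tmul, LinearMap.mul'_apply, P1_one P hP, zero_mul]
    simp
  | cons v vs ih =>
    intro g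
    rw [ιp_cons, hΔ]
    simp only [map_add]
    rw [helper1 P hP, helper3 P hP, counit_left Δ P hP hΔ1 hΔ,
      ih (g ∘ₗ LinearMap.mulLeft R (ExteriorAlgebra.ι R v))]
    simp only [List.length_cons]
    rw [Fin.sum_univ_succ]
    congr 1
    · simp
    · rw [← Finset.sum_neg_distrib]
      refine Finset.sum_congr rfl fun i _ => ?_
      simp only [Fin.val_succ, List.get_eq_getElem, List.getElem_cons_succ,
        List.eraseIdx_cons_succ, ιp_cons,
        LinearMap.comp_apply, LinearMap.mulLeft_apply, pow_succ,
        mul_comm ((-1 : ℤ) ^ (i : ℕ)) (-1 : ℤ), mul_smul, neg_one_zsmul]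

omit hP hΔ1 hΔ in
lemma sign_eraseIdx : ∀ (vs : List V) (i : Fin vs.length),
    ((-1 : ℤ) ^ (i : ℕ)) •
        (ExteriorAlgebra.ι R (vs.get i) * ιp (vs.eraseIdx (i : ℕ))) = ιp vs := by
  intro vs
  induction vs with
  | nil => exact fun i => i.elim0
  | cons v vs ih =>
    intro i
    induction i using Fin.cases with
    | zero => simp
    | succ i =>
      have swap : ExteriorAlgebra.ι R (vs.get i) * ExteriorAlgebra.ι R v
          = -(ExteriorAlgebra.ι R v * ExteriorAlgebra.ι R (vs.get i)) :=
        eq_neg_of_add_eq_zero_left (ExteriorAlgebra.ι_add_mul_swap (vs.get i) v)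
      simp only [List.get_eq_getElem] at swap ih
      simp only [Fin.val_succ, List.get_eq_getElem, List.getElem_cons_succ,
        List.eraseIdx_cons_succ, ιp_cons]
      rw [← mul_assoc, swap, neg_mul, mul_assoc, pow_succ,
        mul_comm ((-1 : ℤ) ^ (i : ℕ)) (-1 : ℤ), mul_smul, neg_one_zsmul, smul_neg,
        neg_neg, ← mul_smul_comm, ih i]

lemma main_claim : ∀ (ℓ : ℕ) (vs : List V),
    sweedlerProd' Δ (P 1) (P 0) ℓ (ιp vs)
      = if vs.length = ℓ then (ℓ.factorial : ℤ) • ιp vs else 0 := by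
  intro ℓ
  induction ℓ with
  | zero =>
    intro vs
    show P 0 (ιp vs) = _
    rw [P_ιp P hP]
    simp
  | succ ℓ ih =>
    intro vs
    show LinearMap.mul' R _ (TensorProduct.map (P 1)
      (sweedlerProd' Δ (P 1) (P 0) ℓ) (Δ (ιp vs))) = _
    rw [sum_lemma Δ P hP hΔ1 hΔ]
    rcases eq_or_ne vs.length (ℓ + 1) with h | h
    · rw [if_pos h]
      have hterm : ∀ i : Fin vs.length,
          ((-1 : ℤ) ^ (i : ℕ)) • (ExteriorAlgebra.ι R (vs.get i) *
              sweedlerProd' Δ (P 1) (P 0) ℓ (ιp (vs.eraseIdx (i : ℕ))))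
            = (ℓ.factorial : ℤ) • ιp vs := by
        intro i
        rw [ih, if_pos (by rw [List.length_eraseIdx_of_lt i.isLt, h]; simp)]
        rw [mul_smul_comm]
        rw [smul_comm]
        rw [sign_eraseIdx]
      rw [Finset.sum_congr rfl fun i _ => hterm i, Finset.sum_const, Finset.card_univ,
        Fintype.card_fin, h, ← natCast_zsmul, smul_smul]
      congr 1
    · rw [if_neg h]
      refine Finset.sum_eq_zero fun i _ => ?_
      have hi := i.isLt
      rw [ih, if_neg (by rw [List.length_eraseIdx_of_lt i.isLt]; omega), mul_zero, smul_zero]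

end WithP

end ProjSweedlerAux

/-- **Projections onto exterior degree via the graded shuffle coproduct.**
Let `Δ` be the graded shuffle coproduct of `Λ V`: the unique linear map with
`Δ(1) = 1 ⊗ 1` and the graded Leibniz rule
`Δ(v ∧ ξ) = (v ⊗ 1) · Δ(ξ) + (gradeInvol ⊗ (v ∧ ·))(Δ ξ)` (this encodes the Koszul
sign convention, and characterizes the algebra morphism `Λ V → Λ V ⊗̂ Λ V` with
`Δ(v) = 1 ⊗ v + v ⊗ 1`).  Let `P ℓ` be the canonical projection onto the homogeneous
component `Λ^ℓ V` (characterized by its values on wedge products of generators).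
Then for every `ξ ∈ Λ V`,
`pr_{Λ^ℓ V}(ξ) = (1/ℓ!) · pr_V(ξ₍₁₎) ∧ ⋯ ∧ pr_V(ξ₍ℓ₎)`,
where the right-hand side is the `ℓ`-fold iterated Sweedler product of the degree-one
projections (`P 1` realises `pr_V` inside `Λ V`, and the trailing factor `P 0` is the
counit, which disappears by counitality). -/
theorem proj_extPow_eq_sweedler
    (Δ : ExteriorAlgebra R V →ₗ[R] ExteriorAlgebra R V ⊗[R] ExteriorAlgebra R V)
    (hΔ1 : Δ 1 = 1 ⊗ₜ[R] 1)
    (hΔ : ∀ (v : V) (ξ : ExteriorAlgebra R V),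
      Δ (ExteriorAlgebra.ι R v * ξ)
        = (ExteriorAlgebra.ι R v ⊗ₜ[R] (1 : ExteriorAlgebra R V)) * Δ ξ
          + TensorProduct.map (gradeInvol R V).toLinearMap
              (LinearMap.mulLeft R (ExteriorAlgebra.ι R v)) (Δ ξ))
    (P : ℕ → (ExteriorAlgebra R V →ₗ[R] ExteriorAlgebra R V))
    (hP : ∀ (ℓ s : ℕ) (x : Fin s → V),
      P ℓ ((List.ofFn fun j => ExteriorAlgebra.ι R (x j)).prod)
        = if s = ℓ then (List.ofFn fun j => ExteriorAlgebra.ι R (x j)).prod else 0)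
    (ℓ : ℕ) (ξ : ExteriorAlgebra R V) :
    P ℓ ξ = algebraMap ℚ R ((ℓ.factorial : ℚ)⁻¹) •
      sweedlerProd' Δ (P 1) (P 0) ℓ ξ := by
  open ProjSweedlerAux in
  refine ext_ιp (f := P ℓ)
    (g := algebraMap ℚ R ((ℓ.factorial : ℚ)⁻¹) • sweedlerProd' Δ (P 1) (P 0) ℓ)
    (fun vs => ?_) ξ
  rw [LinearMap.smul_apply, main_claim Δ P hP hΔ1 hΔ ℓ vs, P_ιp P hP]
  rcases eq_or_ne vs.length ℓ with h | h
  · rw [if_pos h, if_pos h, ← Int.cast_smul_eq_zsmul R, smul_smul]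
    have h2 : ((ℓ.factorial : ℤ) : R) = algebraMap ℚ R (ℓ.factorial : ℚ) := by
      simp
    rw [h2, ← map_mul, inv_mul_cancel₀ (by exact_mod_cast ℓ.factorial_ne_zero), map_one,
      one_smul]
  · rw [if_neg h, if_neg h, smul_zero]
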